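/- arXiv:2106.13728 — 3 statements merged into one kernel-verified Lean document; each statement's English description precedes it below -/
import Mathlib

section
/- Let d ≥ 1, m ∈ ℕ, let n ∈ ℝᵈ be nonzero, c ∈ ℝ, let H = {x ∈ ℝᵈ : ⟨x,n⟩ = c} be the corresponding hyperplane, and let U ⊆ H be nonempty and open in the subspace topology of H. Let p be a real polynomial in d variables of total degree at most m, and suppose that for every integer k with 0 ≤ k ≤ m, the k-th iterated directional derivative in the direction n of the polynomial function x ↦ p(x) vanishes at every point of U. Then p is the zero polynomial. -/
/-!
Along the normal line `t ↦ y + t • n` through a point `y ∈ U`, the polynomial `p` restricts to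
a univariate polynomial of degree at most `m` whose `k`-th derivative at `t = 0` is the `k`-th
directional derivative of `p` at `y`; all of these vanish, so `p` vanishes on every normal line
through `U`. These lines sweep out a neighbourhood of any point of `U`, because `U` is open in the
hyperplane, and a polynomial vanishing on a nonempty open set is zero by analytic continuation.
-/

open scoped RealInnerProductSpace ContDiff Topology
open Polynomial

section DirDeriv

variable (𝕜 : Type*) [NontriviallyNormedField 𝕜]
  {E : Type*} [NormedAddCommGroup E] [NormedSpace 𝕜 E]
  {F : Type*} [NormedAddCommGroup F] [NormedSpace 𝕜 F]

noncomputable def dirDeriv (v : E) (f : E → F) : E → F := fun y => fderiv 𝕜 f y v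

variable {𝕜}

theorem ContDiff.dirDeriv {f : E → F} (hf : ContDiff 𝕜 ∞ f) (v : E) :
    ContDiff 𝕜 ∞ (dirDeriv 𝕜 v f) :=
  (hf.fderiv_right le_rfl).clm_apply contDiff_const

theorem deriv_comp_add_smul {f : E → F} (hf : Differentiable 𝕜 f) (y v : E) :
    deriv (fun t : 𝕜 => f (y + t • v)) = fun t => dirDeriv 𝕜 v f (y + t • v) := by
  funext t
  have hline : HasDerivAt (fun s : 𝕜 => y + s • v) v t := by
    simpa using ((hasDerivAt_id t).smul_const v).const_add y
  exact ((hf _).hasFDerivAt.comp_hasDerivAt t hline).deriv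

theorem iteratedDeriv_comp_add_smul {f : E → F} (hf : ContDiff 𝕜 ∞ f) (y v : E) (k : ℕ) :
    iteratedDeriv k (fun t : 𝕜 => f (y + t • v)) =
      fun t => (dirDeriv 𝕜 v)^[k] f (y + t • v) := by
  induction k generalizing f with
  | zero => simp
  | succ k ih =>
    rw [iteratedDeriv_succ', deriv_comp_add_smul (hf.differentiable (by simp)),
      ih (hf.dirDeriv v), Function.iterate_succ_apply]

end DirDeriv

namespace Polynomial

theorem iteratedDeriv_eval {𝕜 : Type*} [NontriviallyNormedField 𝕜] (Q : 𝕜[X]) (k : ℕ) :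
    iteratedDeriv k (fun x => Q.eval x) = fun x => (derivative^[k] Q).eval x := by
  induction k generalizing Q with
  | zero => simp
  | succ k ih =>
    have hderiv : deriv (fun x => Q.eval x) = fun x => Q.derivative.eval x :=
      _root_.funext fun _ => Q.deriv
    rw [iteratedDeriv_succ', hderiv, ih, Function.iterate_succ_apply]

theorem eq_zero_of_iterate_derivative_eval_zero {R : Type*} [Semiring R]
    [IsAddTorsionFree R] {Q : R[X]} {m : ℕ} (hQ : Q.natDegree ≤ m)
    (h : ∀ k ≤ m, (derivative^[k] Q).eval 0 = 0) : Q = 0 := by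
  ext k
  rcases le_or_gt k m with hk | hk
  · have := h k hk
    rw [← coeff_zero_eq_eval_zero, coeff_iterate_derivative, zero_add,
      Nat.descFactorial_self, smul_eq_zero] at this
    exact this.resolve_left k.factorial_ne_zero
  · exact coeff_eq_zero_of_natDegree_lt (hQ.trans_lt hk)

end Polynomial

namespace MvPolynomial

variable {σ R : Type*} [CommRing R]

noncomputable def restrictToLine (p : MvPolynomial σ R) (y v : σ → R) : R[X] :=
  aeval (fun i => Polynomial.C (y i) + Polynomial.C (v i) * Polynomial.X) p

theorem eval_restrictToLine (p : MvPolynomial σ R) (y v : σ → R) (t : R) :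
    (p.restrictToLine y v).eval t = eval (fun i => y i + t * v i) p := by
  rw [restrictToLine, ← Polynomial.coe_aeval_eq_eval, comp_aeval_apply, ← coe_aeval_eq_eval]
  refine congrArg (aeval · p) (_root_.funext fun i => ?_)
  simp only [map_add, map_mul, Polynomial.aeval_C, Polynomial.aeval_X, Algebra.algebraMap_self,
    RingHom.id_apply]
  ring

theorem natDegree_restrictToLine_le {p : MvPolynomial σ R} {m : ℕ} (hp : p.totalDegree ≤ m)
    (y v : σ → R) : (p.restrictToLine y v).natDegree ≤ m := by
  have hline : ∀ i, (Polynomial.C (y i) + Polynomial.C (v i) * Polynomial.X).natDegree ≤ 1 :=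
    fun i => (natDegree_add_le _ _).trans <| max_le ((natDegree_C _).trans_le zero_le_one) <|
      (natDegree_C_mul_le _ _).trans natDegree_X_le
  simpa [restrictToLine] using aeval_natDegree_le p hp _ hline

variable {𝕜 ι : Type*} [RCLike 𝕜] [Fintype ι]

theorem analyticOnNhd_eval_euclidean (p : MvPolynomial ι 𝕜) :
    AnalyticOnNhd 𝕜 (fun x : EuclideanSpace 𝕜 ι => eval (fun i => x i) p) Set.univ :=
  AnalyticOnNhd.eval_continuousLinearMap
    (PiLp.continuousLinearEquiv 2 𝕜 (fun _ : ι => 𝕜)).toContinuousLinearMap p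

theorem eval_add_smul_eq_zero_of_iterate_dirDeriv {p : MvPolynomial ι 𝕜} {m : ℕ}
    (hp : p.totalDegree ≤ m) {y v : EuclideanSpace 𝕜 ι}
    (h : ∀ k ≤ m, (dirDeriv 𝕜 v)^[k] (fun x => eval (fun i => x i) p) y = 0) (t : 𝕜) :
    eval (fun i => (y + t • v) i) p = 0 := by
  set Q := p.restrictToLine (fun i => y i) (fun i => v i)
  have hQ : (fun s => Q.eval s) = fun s => eval (fun i => (y + s • v) i) p := by
    funext s
    simp [Q, eval_restrictToLine]
  have hQ0 : Q = 0 := by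
    refine eq_zero_of_iterate_derivative_eval_zero (natDegree_restrictToLine_le hp _ _)
      fun k hk => ?_
    rw [← congrFun (Q.iteratedDeriv_eval k) 0, hQ,
      iteratedDeriv_comp_add_smul (analyticOnNhd_eval_euclidean p).contDiff]
    simpa using h k hk
  rw [← congrFun hQ t, hQ0, Polynomial.eval_zero]

theorem eq_zero_of_eventuallyEq_zero {p : MvPolynomial ι 𝕜} {x₀ : EuclideanSpace 𝕜 ι}
    (h : (fun x : EuclideanSpace 𝕜 ι => eval (fun i => x i) p) =ᶠ[𝓝 x₀] 0) : p = 0 := by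
  have hzero :=
    (analyticOnNhd_eval_euclidean p).eqOn_zero_of_preconnected_of_eventuallyEq_zero
      isPreconnected_univ (Set.mem_univ x₀) h
  exact MvPolynomial.funext fun z => by
    simpa using hzero (Set.mem_univ ((WithLp.equiv 2 (ι → 𝕜)).symm z))

end MvPolynomial

theorem eventually_exists_add_smul_eq_of_isOpen_hyperplane {E : Type*}
    [NormedAddCommGroup E] [InnerProductSpace ℝ E] {n : E} (hn : n ≠ 0) {c : ℝ} {U : Set E}
    (hUsub : U ⊆ {x : E | ⟪x, n⟫ = c})
    (hUopen : IsOpen {x : {x : E | ⟪x, n⟫ = c} | (x : E) ∈ U}) {x₀ : E}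
    (hx₀ : x₀ ∈ U) : ∀ᶠ x in 𝓝 x₀, ∃ y ∈ U, ∃ t : ℝ, y + t • n = x := by
  set r : E → ℝ := fun x => (⟪x, n⟫ - c) / ‖n‖ ^ 2
  -- `π` projects orthogonally onto the hyperplane; `U` pulls back under it to a neighbourhood.
  set π : E → E := fun x => x - r x • n
  have hπ : ∀ x, ⟪π x, n⟫ = c := fun x => by
    have : ‖n‖ ≠ 0 := norm_ne_zero_iff.mpr hn
    simp only [π, r, inner_sub_left, real_inner_smul_left, real_inner_self_eq_norm_sq]
    field_simp
    ring
  have hcont : Continuous fun x => (⟨π x, hπ x⟩ : {x : E | ⟪x, n⟫ = c}) :=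
    Continuous.subtype_mk (by fun_prop) hπ
  have hπx₀ : π x₀ = x₀ := by simp [π, r, show ⟪x₀, n⟫ = c from hUsub hx₀]
  filter_upwards [hcont.continuousAt.preimage_mem_nhds (hUopen.mem_nhds (by simpa [hπx₀]))]
    with x hx
  exact ⟨π x, hx, r x, sub_add_cancel x _⟩

theorem stmt_2_general (d m : ℕ)
    (n : EuclideanSpace ℝ (Fin d)) (hn : n ≠ 0) (c : ℝ)
    (U : Set (EuclideanSpace ℝ (Fin d)))
    (hUsub : U ⊆ {x : EuclideanSpace ℝ (Fin d) | ⟪x, n⟫ = c})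
    (hUne : U.Nonempty)
    (hUopen : IsOpen {x : {x : EuclideanSpace ℝ (Fin d) | ⟪x, n⟫ = c} |
      (x : EuclideanSpace ℝ (Fin d)) ∈ U})
    (p : MvPolynomial (Fin d) ℝ) (hp : p.totalDegree ≤ m)
    (hvan : ∀ k : ℕ, k ≤ m → ∀ x ∈ U,
      ((fun f : EuclideanSpace ℝ (Fin d) → ℝ => fun y => fderiv ℝ f y n)^[k]
        (fun y : EuclideanSpace ℝ (Fin d) => MvPolynomial.eval (fun i => y i) p)) x = 0) :
    p = 0 := by
  obtain ⟨x₀, hx₀⟩ := hUne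
  apply MvPolynomial.eq_zero_of_eventuallyEq_zero (x₀ := x₀)
  filter_upwards [eventually_exists_add_smul_eq_of_isOpen_hyperplane hn hUsub hUopen hx₀]
    with x ⟨y, hy, t, hx⟩
  rw [← hx]
  exact MvPolynomial.eval_add_smul_eq_zero_of_iterate_dirDeriv hp (fun k hk => hvan k hk y hy) t

/-- If a polynomial of total degree at most `m` has all its iterated
directional derivatives in the direction `n`, up to order `m`, vanishing on a
nonempty relatively open subset of the hyperplane `{x | ⟪x, n⟫ = c}`, then it
is the zero polynomial. -/
theorem stmt_2 (d m : ℕ) (hd : 1 ≤ d)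
    (n : EuclideanSpace ℝ (Fin d)) (hn : n ≠ 0) (c : ℝ)
    (U : Set (EuclideanSpace ℝ (Fin d)))
    (hUsub : U ⊆ {x : EuclideanSpace ℝ (Fin d) | ⟪x, n⟫ = c})
    (hUne : U.Nonempty)
    (hUopen : IsOpen {x : {x : EuclideanSpace ℝ (Fin d) | ⟪x, n⟫ = c} |
      (x : EuclideanSpace ℝ (Fin d)) ∈ U})
    (p : MvPolynomial (Fin d) ℝ) (hp : p.totalDegree ≤ m)
    (hvan : ∀ k : ℕ, k ≤ m → ∀ x ∈ U,
      ((fun f : EuclideanSpace ℝ (Fin d) → ℝ => fun y => fderiv ℝ f y n)^[k]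
        (fun y : EuclideanSpace ℝ (Fin d) => MvPolynomial.eval (fun i => y i) p)) x = 0) :
    p = 0 :=
  stmt_2_general d m n hn c U hUsub hUne hUopen p hp hvan
end

section
/- Let V be a finite-dimensional real inner product space, let a : V × V → ℝ be a bilinear form with a(u,u) ≥ α‖u‖² for some α > 0 and all u ∈ V, let s : V × V → ℝ be a symmetric bilinear form with s(u,u) ≥ 0 for all u ∈ V, and let b : V → ℝ be linear. Set W := {w ∈ V : s(w,w) = 0}. For γ > 0 let u_γ ∈ V be the unique element with a(u_γ,v) + γ·s(u_γ,v) = b(v) for all v ∈ V, and let u_∞ ∈ W be the unique element with a(u_∞,w) = b(w) for all w ∈ W. Then u_γ converges to u_∞ as γ → ∞. -/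
/-!
Testing the penalised equation with `u_γ` itself gives the energy estimate
`α ‖u_γ‖² + γ s(u_γ, u_γ) ≤ ‖b‖ ‖u_γ‖`, so `u_γ` stays in a fixed ball and
`s(u_γ, u_γ) = O(1/γ)`. By Cauchy–Schwarz for the semidefinite form `s`, the set `W` is the
kernel of `s`, so `u_γ` solves the constrained problem on `W` for every `γ`. Passing to the
limit, every cluster point of `u_γ` lies in `W` and solves the constrained problem, hence equals
`u_∞` by coercivity of `a`; a family in a compact ball with a unique cluster point converges.
-/

open Filter Topology

theorem MapClusterPt.eq_of_tendsto {X ι : Type*} [TopologicalSpace X] [T2Space X]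
    {F : Filter ι} {u : ι → X} {x y : X} (hx : MapClusterPt x F u) (hy : Tendsto u F (𝓝 y)) :
    x = y :=
  eq_of_nhds_neBot (hx.neBot.mono (inf_le_inf_left _ hy))

section Coercive

variable {E : Type*} [NormedAddCommGroup E] [NormedSpace ℝ E]
  {a s : E →ₗ[ℝ] E →ₗ[ℝ] ℝ} {α : ℝ}

theorem eq_of_forall_mem_apply_eq_of_coercive (hα : 0 < α) {W : Submodule ℝ E}
    (ha : ∀ u ∈ W, α * ‖u‖ ^ 2 ≤ a u u) {x y : E} (hx : x ∈ W) (hy : y ∈ W)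
    (h : ∀ w ∈ W, a x w = a y w) : x = y := by
  have hxy : x - y ∈ W := W.sub_mem hx hy
  have hzero : a (x - y) (x - y) = 0 := by
    rw [LinearMap.map_sub₂, h _ hxy, sub_self]
  have hnorm : ‖x - y‖ ^ 2 = 0 := le_antisymm (by nlinarith [ha _ hxy]) (sq_nonneg _)
  simpa [sub_eq_zero] using hnorm

variable {b : E →L[ℝ] ℝ} {γ : ℝ} {u : E}

theorem norm_le_of_penalized (hα : 0 < α) (ha : α * ‖u‖ ^ 2 ≤ a u u) (hs : 0 ≤ s u u)
    (hγ : 0 ≤ γ) (hu : a u u + γ * s u u = b u) : ‖u‖ ≤ ‖b‖ / α := by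
  have hb : b u ≤ ‖b‖ * ‖u‖ := (le_abs_self _).trans (b.le_opNorm u)
  rw [le_div_iff₀ hα]
  rcases (norm_nonneg u).eq_or_lt with h | h
  · rw [← h, zero_mul]
    exact norm_nonneg b
  · nlinarith [mul_nonneg hγ hs]

theorem mul_apply_self_le_of_penalized (hα : 0 < α) (ha : α * ‖u‖ ^ 2 ≤ a u u)
    (hs : 0 ≤ s u u) (hγ : 0 ≤ γ) (hu : a u u + γ * s u u = b u) :
    γ * s u u ≤ ‖b‖ ^ 2 / α := by
  have hb : b u ≤ ‖b‖ * ‖u‖ := (le_abs_self _).trans (b.le_opNorm u)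
  have hnorm := norm_le_of_penalized hα ha hs hγ hu
  have ha_nonneg : 0 ≤ a u u := le_trans (by positivity) ha
  calc γ * s u u ≤ ‖b‖ * ‖u‖ := by linarith
    _ ≤ ‖b‖ * (‖b‖ / α) := mul_le_mul_of_nonneg_left hnorm (norm_nonneg b)
    _ = ‖b‖ ^ 2 / α := by ring

end Coercive

/-- Convergence of the penalised solutions to the constrained (aggregated)
solution as the penalty parameter tends to infinity. -/
theorem stmt_3 (V : Type*) [NormedAddCommGroup V] [InnerProductSpace ℝ V]
    [FiniteDimensional ℝ V]
    (a s : V →ₗ[ℝ] V →ₗ[ℝ] ℝ) (α : ℝ) (hα : 0 < α)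
    (ha : ∀ u : V, α * ‖u‖ ^ 2 ≤ a u u)
    (hs_symm : ∀ u v : V, s u v = s v u)
    (hs_pos : ∀ u : V, 0 ≤ s u u)
    (b : V →ₗ[ℝ] ℝ)
    (u : ℝ → V)
    (hu : ∀ γ : ℝ, 0 < γ → ∀ v : V, a (u γ) v + γ * s (u γ) v = b v)
    (uinf : V) (huinf_mem : s uinf uinf = 0)
    (huinf : ∀ w : V, s w w = 0 → a uinf w = b w) :
    Tendsto u atTop (nhds uinf) := by
  have hker (w : V) : s w w = 0 ↔ w ∈ LinearMap.ker s :=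
    LinearMap.BilinForm.apply_apply_same_eq_zero_iff s hs_pos ⟨hs_symm⟩
  set bC := LinearMap.toContinuousLinearMap b
  have hu_self (γ : ℝ) (hγ : 0 < γ) : a (u γ) (u γ) + γ * s (u γ) (u γ) = bC (u γ) :=
    hu γ hγ (u γ)
  have hpen : Tendsto (fun γ => s (u γ) (u γ)) atTop (𝓝 0) := by
    refine squeeze_zero' (Eventually.of_forall fun γ => hs_pos (u γ)) ?_
      ((tendsto_const_nhds (x := ‖bC‖ ^ 2 / α)).div_atTop tendsto_id)
    filter_upwards [eventually_gt_atTop 0] with γ hγ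
    rw [id, le_div_iff₀ hγ, mul_comm]
    exact mul_apply_self_le_of_penalized hα (ha _) (hs_pos _) hγ.le (hu_self γ hγ)
  have hgal (w : V) (hw : w ∈ LinearMap.ker s) :
      Tendsto (fun γ => a (u γ) w) atTop (𝓝 (b w)) := by
    refine tendsto_const_nhds.congr' ?_
    filter_upwards [eventually_gt_atTop 0] with γ hγ
    rw [← hu γ hγ w, hs_symm, LinearMap.mem_ker.mp hw, LinearMap.zero_apply, mul_zero, add_zero]
  refine (isCompact_closedBall (0 : V) (‖bC‖ / α)).tendsto_nhds_of_unique_mapClusterPt ?_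
    fun x _ hx => ?_
  · filter_upwards [eventually_gt_atTop 0] with γ hγ
    rw [mem_closedBall_zero_iff]
    exact norm_le_of_penalized hα (ha _) (hs_pos _) hγ.le (hu_self γ hγ)
  have hxW : x ∈ LinearMap.ker s := (hker x).mp <|
    (hx.continuousAt_comp (s.toContinuousBilinearMap.continuous.clm_apply
      continuous_id).continuousAt).eq_of_tendsto hpen
  refine eq_of_forall_mem_apply_eq_of_coercive hα (fun v _ => ha v) hxW
    ((hker uinf).mp huinf_mem) fun w hw => ?_
  rw [huinf w ((hker w).mpr hw)]
  have hcont : Continuous (a.flip w) := (a.flip w).continuous_of_finiteDimensional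
  exact (hx.continuousAt_comp hcont.continuousAt).eq_of_tendsto (hgal w hw)
end

section
/- Let A be a real symmetric positive definite n×n matrix and S a real symmetric positive semidefinite n×n matrix with S ≠ 0 and with a nonzero vector x₀ satisfying S·x₀ = 0. Then for every γ > 0 the matrix A + γS is invertible and its spectral condition number κ₂(A + γS) := ‖A + γS‖₂·‖(A + γS)⁻¹‖₂ (operator norms induced by the Euclidean norm) satisfies κ₂(A + γS) ≥ γ·‖S‖₂ / ‖A‖₂. -/
/-!
The penalty does not act on `ker S`: for `x₀ ∈ ker S` we have `(A + γS) x₀ = A x₀`, so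
`x₀ = (A + γS)⁻¹ A x₀` and hence `‖(A + γS)⁻¹‖ ≥ 1 / ‖A‖`. On the other hand the norm of a
sum of positive semidefinite operators dominates the norm of each summand (the norm of a positive
operator is the supremum of its Rayleigh quotient), so `‖A + γS‖ ≥ γ‖S‖`.
-/

open scoped Matrix

namespace ContinuousLinearMap

variable {𝕜 E : Type*} [RCLike 𝕜] [NormedAddCommGroup E] [InnerProductSpace 𝕜 E]

theorem IsPositive.rayleighQuotient_nonneg {T : E →L[𝕜] E} (hT : T.IsPositive) (x : E) :
    0 ≤ T.rayleighQuotient x :=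
  div_nonneg (hT.re_inner_nonneg_left x) (sq_nonneg _)

theorem IsPositive.norm_le_norm_add {T S : E →L[𝕜] E} (hT : T.IsPositive) (hS : S.IsPositive) :
    ‖S‖ ≤ ‖T + S‖ := by
  rw [S.norm_eq_iSup_rayleighQuotient hS.isSymmetric]
  refine ciSup_le fun x => ?_
  calc |S.rayleighQuotient x|
      = S.rayleighQuotient x := abs_of_nonneg (hS.rayleighQuotient_nonneg x)
    _ ≤ T.rayleighQuotient x + S.rayleighQuotient x :=
        le_add_of_nonneg_left (hT.rayleighQuotient_nonneg x)
    _ = (T + S).rayleighQuotient x := (T.rayleighQuotient_add S).symm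
    _ ≤ |(T + S).rayleighQuotient x| := le_abs_self _
    _ ≤ ‖T + S‖ := (T + S).rayleighQuotient_le_norm x

theorem one_le_opNorm_mul_opNorm_of_apply_apply_eq {F G : Type*}
    [NormedAddCommGroup F] [NormedSpace 𝕜 F] [NormedAddCommGroup G] [NormedSpace 𝕜 G]
    {f : F →L[𝕜] G} {g : G →L[𝕜] F} {v : F}
    (hv : v ≠ 0) (hgf : g (f v) = v) : 1 ≤ ‖g‖ * ‖f‖ := by
  have hv' : 0 < ‖v‖ := norm_pos_iff.2 hv
  have : ‖v‖ ≤ ‖g‖ * ‖f‖ * ‖v‖ :=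
    calc ‖v‖ = ‖(g.comp f) v‖ := by rw [comp_apply, hgf]
      _ ≤ ‖g.comp f‖ * ‖v‖ := le_opNorm _ _
      _ ≤ ‖g‖ * ‖f‖ * ‖v‖ := by gcongr; exact opNorm_comp_le g f
  exact le_of_mul_le_mul_right (by rwa [one_mul]) hv'

end ContinuousLinearMap

namespace Matrix

open scoped ComplexOrder

variable {𝕜 n : Type*} [RCLike 𝕜] [Fintype n] [DecidableEq n]

theorem PosSemidef.isPositive_toEuclideanCLM {A : Matrix n n 𝕜} (hA : A.PosSemidef) :
    (toEuclideanCLM (𝕜 := 𝕜) A).IsPositive := by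
  rw [← ContinuousLinearMap.isPositive_toLinearMap_iff, coe_toEuclideanCLM_eq_toEuclideanLin]
  exact isPositive_toEuclideanLin_iff.2 hA

theorem PosSemidef.norm_toEuclideanCLM_le_add {A B : Matrix n n 𝕜} (hA : A.PosSemidef)
    (hB : B.PosSemidef) : ‖toEuclideanCLM (𝕜 := 𝕜) B‖ ≤ ‖toEuclideanCLM (𝕜 := 𝕜) (A + B)‖ := by
  rw [map_add]
  exact hA.isPositive_toEuclideanCLM.norm_le_norm_add hB.isPositive_toEuclideanCLM

theorem one_le_norm_toEuclideanCLM_inv_mul_norm {A B : Matrix n n 𝕜} (hB : IsUnit B)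
    {v : n → 𝕜} (hv : v ≠ 0) (hBv : B *ᵥ v = A *ᵥ v) :
    1 ≤ ‖toEuclideanCLM (𝕜 := 𝕜) B⁻¹‖ * ‖toEuclideanCLM (𝕜 := 𝕜) A‖ := by
  refine ContinuousLinearMap.one_le_opNorm_mul_opNorm_of_apply_apply_eq
    (v := WithLp.toLp 2 v) (by simpa using hv) ?_
  have hAB : toEuclideanCLM (𝕜 := 𝕜) A (WithLp.toLp 2 v) =
      toEuclideanCLM (𝕜 := 𝕜) B (WithLp.toLp 2 v) := by
    simp only [toEuclideanCLM_toLp, hBv]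
  rw [hAB, ← mul_apply_eq_comp, ← map_mul, nonsing_inv_mul _ ((isUnit_iff_isUnit_det B).1 hB),
    map_one, one_apply_eq_self]

end Matrix

theorem stmt_7_general (n : ℕ) (A S : Matrix (Fin n) (Fin n) ℝ)
    (hA : A.PosDef) (hS : S.PosSemidef)
    (x₀ : Fin n → ℝ) (hx₀ : x₀ ≠ 0) (hSx₀ : S.mulVec x₀ = 0)
    (γ : ℝ) (hγ : 0 < γ) :
    IsUnit (A + γ • S) ∧
      γ * ‖Matrix.toEuclideanCLM (𝕜 := ℝ) S‖ / ‖Matrix.toEuclideanCLM (𝕜 := ℝ) A‖ ≤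
        ‖Matrix.toEuclideanCLM (𝕜 := ℝ) (A + γ • S)‖ *
          ‖Matrix.toEuclideanCLM (𝕜 := ℝ) (A + γ • S)⁻¹‖ := by
  set e := Matrix.toEuclideanCLM (𝕜 := ℝ) (n := Fin n)
  have hγS : (γ • S).PosSemidef := hS.smul hγ.le
  have hB : IsUnit (A + γ • S) := (hA.add_posSemidef hγS).isUnit
  have hker : (A + γ • S) *ᵥ x₀ = A *ᵥ x₀ := by
    rw [Matrix.add_mulVec, Matrix.smul_mulVec, hSx₀, smul_zero, add_zero]
  have hinv : 1 ≤ ‖e (A + γ • S)⁻¹‖ * ‖e A‖ :=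
    Matrix.one_le_norm_toEuclideanCLM_inv_mul_norm hB hx₀ hker
  have hpenalty : γ * ‖e S‖ ≤ ‖e (A + γ • S)‖ := by
    simpa [e, norm_smul, abs_of_pos hγ] using hA.posSemidef.norm_toEuclideanCLM_le_add hγS
  have hA0 : 0 < ‖e A‖ := pos_of_mul_pos_right (one_pos.trans_le hinv) (norm_nonneg _)
  refine ⟨hB, (div_le_iff₀ hA0).2 ?_⟩
  calc γ * ‖e S‖ ≤ ‖e (A + γ • S)‖ * 1 := by rwa [mul_one]
    _ ≤ ‖e (A + γ • S)‖ * (‖e (A + γ • S)⁻¹‖ * ‖e A‖) := by gcongr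
    _ = _ := by ring

/-- Linear growth with γ of the condition number of the ghost-penalised matrix. -/
theorem stmt_7 (n : ℕ) (A S : Matrix (Fin n) (Fin n) ℝ)
    (hA : A.PosDef) (hS : S.PosSemidef) (hSne : S ≠ 0)
    (x₀ : Fin n → ℝ) (hx₀ : x₀ ≠ 0) (hSx₀ : S.mulVec x₀ = 0)
    (γ : ℝ) (hγ : 0 < γ) :
    IsUnit (A + γ • S) ∧
      γ * ‖Matrix.toEuclideanCLM (𝕜 := ℝ) S‖ / ‖Matrix.toEuclideanCLM (𝕜 := ℝ) A‖ ≤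
        ‖Matrix.toEuclideanCLM (𝕜 := ℝ) (A + γ • S)‖ *
          ‖Matrix.toEuclideanCLM (𝕜 := ℝ) (A + γ • S)⁻¹‖ :=
  stmt_7_general n A S hA hS x₀ hx₀ hSx₀ γ hγ
end
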